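/- In a root system with positive roots Δ^+ of cardinality N, the only subset S ⊆ Δ of the set of all roots with |S| = N, consisting of pairwise distinct roots, whose sum equals 2ρ = Σ_{α ∈ Δ^+} α, is S = Δ^+ itself. -/
import Mathlib


/-- In a root system `Δ = Δ⁺ ∪ (−Δ⁺)` (positivity being cut out by a linear
functional `ℓ` positive on `Δ⁺`), the only subset `S ⊆ Δ` of cardinality `|Δ⁺|` whose sum is
`2ρ = Σ_{α ∈ Δ⁺} α` is `S = Δ⁺` itself. -/
theorem subset_sum_eq_two_rho_unique
    {E : Type*} [AddCommGroup E] [Module ℝ E] [DecidableEq E]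
    (Δplus Δ : Finset E)
    (hΔ : Δ = Δplus ∪ Δplus.image (fun a => -a))
    (ℓ : E →ₗ[ℝ] ℝ) (hℓ : ∀ α ∈ Δplus, 0 < ℓ α)
    (S : Finset E) (hS : S ⊆ Δ)
    (hcard : S.card = Δplus.card)
    (hsum : ∑ x ∈ S, x = ∑ x ∈ Δplus, x) :
    S = Δplus := by
  classical
  set A := S ∩ Δplus with hA
  set B := S \ Δplus with hB
  have hSplit : S = A ∪ B := by
    ext x; simp [hA, hB]; tauto
  have hdisj : Disjoint A B := by
    rw [hA, hB]
    exact Finset.disjoint_sdiff.mono_left Finset.inter_subset_right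
  have hBneg : ∀ b ∈ B, ℓ b < 0 := by
    intro b hb
    have hbS : b ∈ S := (Finset.sdiff_subset) hb
    have hbnp : b ∉ Δplus := (Finset.mem_sdiff.mp hb).2
    have := hS hbS
    rw [hΔ, Finset.mem_union] at this
    rcases this with h | h
    · exact absurd h hbnp
    · obtain ⟨a, ha, rfl⟩ := Finset.mem_image.mp h
      have := hℓ a ha
      simpa using neg_neg_of_pos this
  have hsumℓ : ∑ x ∈ A, ℓ x + ∑ x ∈ B, ℓ x = ∑ x ∈ Δplus, ℓ x := by
    rw [← Finset.sum_union hdisj, ← hSplit, ← map_sum, ← map_sum, hsum]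
  have hAle : ∑ x ∈ A, ℓ x ≤ ∑ x ∈ Δplus, ℓ x := by
    apply Finset.sum_le_sum_of_subset_of_nonneg (Finset.inter_subset_right)
    intro i hi _
    exact (hℓ i hi).le
  have hBle : ∑ x ∈ B, ℓ x ≤ 0 := by
    apply Finset.sum_nonpos
    intro b hb
    exact (hBneg b hb).le
  -- force B = ∅
  have hBempty : B = ∅ := by
    by_contra h
    have hne : B.Nonempty := Finset.nonempty_iff_ne_empty.mpr h
    have : ∑ x ∈ B, ℓ x < 0 := Finset.sum_neg hBneg hne
    linarith
  have hAeq : ∑ x ∈ A, ℓ x = ∑ x ∈ Δplus, ℓ x := by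
    rw [hBempty] at hsumℓ
    simpa using hsumℓ
  -- A = Δplus
  have hAsub : A ⊆ Δplus := Finset.inter_subset_right
  have hAΔ : A = Δplus := by
    by_contra h
    have hssub : A ⊂ Δplus := hAsub.ssubset_of_ne h
    obtain ⟨x, hx, hxn⟩ := Finset.exists_of_ssubset hssub
    have : ∑ x ∈ A, ℓ x < ∑ x ∈ Δplus, ℓ x :=
      Finset.sum_lt_sum_of_subset hssub.subset hx hxn (hℓ x hx)
        (fun j hj _ => (hℓ j hj).le)
    linarith
  rw [hSplit, hBempty, Finset.union_empty, hAΔ]
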